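/- arXiv:2209.08563 — 9 statements merged into one kernel-verified Lean document; each statement's English description precedes it below -/
import Mathlib

section
/- For all x₁, x₂ ∈ [0,1], the ratio min(x₁ + x₂, 1) / (x₁ + x₂ - x₁x₂) is at most 4/3, where the ratio is defined to be 1 when both numerator and denominator are 0. -/
theorem stmt_3 (x₁ x₂ : ℝ) (h₁0 : 0 ≤ x₁) (h₁1 : x₁ ≤ 1) (h₂0 : 0 ≤ x₂) (h₂1 : x₂ ≤ 1) :
    (if min (x₁ + x₂) 1 = 0 ∧ x₁ + x₂ - x₁ * x₂ = 0 then (1 : ℝ)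
      else min (x₁ + x₂) 1 / (x₁ + x₂ - x₁ * x₂)) ≤ 4 / 3 := by
  split_ifs with h
  · norm_num
  · have hd : 0 < x₁ + x₂ - x₁ * x₂ := by
      rcases eq_or_lt_of_le (show 0 ≤ x₁ + x₂ - x₁ * x₂ by nlinarith) with he | hlt
      · exfalso
        have hx1 : x₁ = 0 := by nlinarith
        have hx2 : x₂ = 0 := by nlinarith
        exact h ⟨by simp [hx1, hx2], by simp [hx1, hx2]⟩
      · exact hlt
    rw [div_le_iff₀ hd]
    rcases le_total (x₁ + x₂) 1 with hs | hs
    · rw [min_eq_left hs]; nlinarith [sq_nonneg (x₁ - x₂), mul_nonneg (add_nonneg h₁0 h₂0) (sub_nonneg.2 hs)]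
    · rw [min_eq_right hs]; nlinarith [sq_nonneg (x₁ - x₂), mul_nonneg (sub_nonneg.2 hs) (by linarith : (0:ℝ) ≤ 2 - (x₁ + x₂))]
end

section
/- Let f: Finset (Fin 2) → ℝ be monotone and submodular with f(∅) = 0 and f({0,1}) = 1. For all x₁, x₂ ∈ [0,1] with x₁ + x₂ ≤ 1, we have 4·(f({0})·x₁ + f({1})·x₂ + (1 - f({0}) - f({1}))·x₁·x₂) ≥ 3·(f({0})·x₁ + f({1})·x₂). -/
theorem stmt_4 (f : Finset (Fin 2) → ℝ)
    (hmono : ∀ S T : Finset (Fin 2), S ⊆ T → f S ≤ f T)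
    (hsub : ∀ S T : Finset (Fin 2), f (S ∩ T) + f (S ∪ T) ≤ f S + f T)
    (h0 : f ∅ = 0) (h1 : f {0, 1} = 1)
    (x₁ x₂ : ℝ) (hx₁0 : 0 ≤ x₁) (hx₁1 : x₁ ≤ 1) (hx₂0 : 0 ≤ x₂) (hx₂1 : x₂ ≤ 1)
    (hsum : x₁ + x₂ ≤ 1) :
    4 * (f {0} * x₁ + f {1} * x₂ + (1 - f {0} - f {1}) * x₁ * x₂) ≥
      3 * (f {0} * x₁ + f {1} * x₂) := by
  have hi : ({0} : Finset (Fin 2)) ∩ {1} = ∅ := by decide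
  have hu : ({0} : Finset (Fin 2)) ∪ {1} = {0, 1} := by decide
  have hab := hsub {0} {1}
  rw [hi, hu, h0, h1] at hab
  have ha0 : 0 ≤ f {0} := h0 ▸ hmono ∅ {0} (by decide)
  have hb0 : 0 ≤ f {1} := h0 ▸ hmono ∅ {1} (by decide)
  have ha1 : f {0} ≤ 1 := h1 ▸ hmono {0} {0, 1} (by decide)
  have hb1 : f {1} ≤ 1 := h1 ▸ hmono {1} {0, 1} (by decide)
  nlinarith [mul_nonneg hx₁0 hx₂0, sq_nonneg (x₁ - x₂), sq_nonneg (x₁ + x₂),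
    mul_nonneg (sub_nonneg.2 hx₁1) hx₂0, mul_nonneg (sub_nonneg.2 hx₂1) hx₁0,
    mul_nonneg (mul_nonneg hx₁0 hx₂0) (sub_nonneg.2 hsum),
    mul_nonneg (sub_nonneg.2 ha1) (mul_nonneg hx₁0 hx₂0),
    mul_nonneg (sub_nonneg.2 hb1) (mul_nonneg hx₁0 hx₂0),
    mul_nonneg (sub_nonneg.2 ha1) hx₁0, mul_nonneg (sub_nonneg.2 hb1) hx₂0,
    mul_nonneg (by linarith : (0:ℝ) ≤ f {0} + f {1} - 1) (mul_nonneg hx₁0 hx₂0),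
    mul_nonneg (by linarith : (0:ℝ) ≤ f {0} + f {1} - 1)
      (by nlinarith [sq_nonneg (x₁ - x₂)] : (0:ℝ) ≤ x₁ + x₂ - 4 * x₁ * x₂)]
end

section
/- Let f: Finset (Fin 2) → ℝ be monotone and submodular with f(∅) = 0 and f({0,1}) = 1. For all x₁, x₂ ∈ [0,1] with x₁ + x₂ ≥ 1, we have 4·(f({0})·x₁ + f({1})·x₂ + (1 - f({0}) - f({1}))·x₁·x₂) ≥ 3·(f({0}) + f({1}) - 1 + (1 - f({1}))·x₁ + (1 - f({0}))·x₂). -/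
theorem stmt_5 (f : Finset (Fin 2) → ℝ)
    (hmono : ∀ S T : Finset (Fin 2), S ⊆ T → f S ≤ f T)
    (hsub : ∀ S T : Finset (Fin 2), f (S ∩ T) + f (S ∪ T) ≤ f S + f T)
    (h0 : f ∅ = 0) (h1 : f {0, 1} = 1)
    (x₁ x₂ : ℝ) (hx₁0 : 0 ≤ x₁) (hx₁1 : x₁ ≤ 1) (hx₂0 : 0 ≤ x₂) (hx₂1 : x₂ ≤ 1)
    (hsum : x₁ + x₂ ≥ 1) :
    4 * (f {0} * x₁ + f {1} * x₂ + (1 - f {0} - f {1}) * x₁ * x₂) ≥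
      3 * (f {0} + f {1} - 1 + (1 - f {1}) * x₁ + (1 - f {0}) * x₂) := by
  have ha0 : 0 ≤ f {0} := h0 ▸ hmono ∅ {0} (Finset.empty_subset _)
  have hb0 : 0 ≤ f {1} := h0 ▸ hmono ∅ {1} (Finset.empty_subset _)
  have ha1 : f {0} ≤ 1 := h1 ▸ hmono {0} {0, 1} (by decide)
  have hb1 : f {1} ≤ 1 := h1 ▸ hmono {1} {0, 1} (by decide)
  have hs := hsub {0} {1}
  have e1 : ({0} : Finset (Fin 2)) ∩ {1} = ∅ := by decide
  have e2 : ({0} : Finset (Fin 2)) ∪ {1} = {0, 1} := by decide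
  rw [e1, e2, h0, h1] at hs
  nlinarith [mul_nonneg hx₁0 hx₂0, mul_nonneg (sub_nonneg.2 hx₁1) (sub_nonneg.2 hx₂1),
    mul_nonneg (sub_nonneg.2 ha1) (sub_nonneg.2 hb1),
    mul_nonneg (sub_nonneg.2 ha1) (sub_nonneg.2 hx₂1),
    mul_nonneg (sub_nonneg.2 hb1) (sub_nonneg.2 hx₁1),
    mul_nonneg (sub_nonneg.2 hx₁1) (sub_nonneg.2 hx₂1),
    sq_nonneg (x₁ + x₂ - 1), sq_nonneg (x₁ - x₂),
    mul_nonneg (by linarith : (0:ℝ) ≤ f {0} + f {1} - 1) (by linarith : (0:ℝ) ≤ x₁ + x₂ - 1),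
    mul_nonneg (mul_nonneg (by linarith : (0:ℝ) ≤ f {0} + f {1} - 1) (sub_nonneg.2 hx₁1)) (sub_nonneg.2 hx₂1)]
end

section
/- Let f: Finset (Fin 2) → ℝ be monotone submodular with f(∅) = 0, f({0,1}) = 1, and let x₁, x₂ ∈ [0,1] with x₁ + x₂ ≤ 1. Then the distribution θ assigning probability 1 - x₁ - x₂ to ∅, x₁ to {0}, x₂ to {1}, and 0 to {0,1} is a probability distribution with marginals x₁, x₂, and its expected value x₁f({0}) + x₂f({1}) is an upper bound for the expected value of f under any probability distribution θ' on subsets of {0,1} with marginals x₁, x₂. -/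
lemma univ_finset_fin2 : (Finset.univ : Finset (Finset (Fin 2))) =
    {∅, {0}, {1}, {0, 1}} := by decide

lemma filter0 : (Finset.univ.filter (fun S : Finset (Fin 2) => (0 : Fin 2) ∈ S)) =
    {{0}, {0, 1}} := by decide

lemma filter1 : (Finset.univ.filter (fun S : Finset (Fin 2) => (1 : Fin 2) ∈ S)) =
    {{1}, {0, 1}} := by decide

theorem stmt_6 (f : Finset (Fin 2) → ℝ)
    (hmono : ∀ S T : Finset (Fin 2), S ⊆ T → f S ≤ f T)
    (hsub : ∀ S T : Finset (Fin 2), f (S ∩ T) + f (S ∪ T) ≤ f S + f T)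
    (h0 : f ∅ = 0) (h1 : f {0, 1} = 1)
    (x₁ x₂ : ℝ) (hx₁0 : 0 ≤ x₁) (hx₁1 : x₁ ≤ 1) (hx₂0 : 0 ≤ x₂) (hx₂1 : x₂ ≤ 1)
    (hsum : x₁ + x₂ ≤ 1)
    (θ : Finset (Fin 2) → ℝ)
    (hθempty : θ ∅ = 1 - x₁ - x₂) (hθ0 : θ {0} = x₁) (hθ1 : θ {1} = x₂) (hθ01 : θ {0, 1} = 0) :
    (∀ S, 0 ≤ θ S) ∧ (∑ S : Finset (Fin 2), θ S = 1) ∧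
    (∑ S ∈ Finset.univ.filter (fun S : Finset (Fin 2) => (0 : Fin 2) ∈ S), θ S = x₁) ∧
    (∑ S ∈ Finset.univ.filter (fun S : Finset (Fin 2) => (1 : Fin 2) ∈ S), θ S = x₂) ∧
    (∀ θ' : Finset (Fin 2) → ℝ,
      (∀ S, 0 ≤ θ' S) →
      (∑ S : Finset (Fin 2), θ' S = 1) →
      (∑ S ∈ Finset.univ.filter (fun S : Finset (Fin 2) => (0 : Fin 2) ∈ S), θ' S = x₁) →
      (∑ S ∈ Finset.univ.filter (fun S : Finset (Fin 2) => (1 : Fin 2) ∈ S), θ' S = x₂) →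
      ∑ S : Finset (Fin 2), θ' S * f S ≤ x₁ * f {0} + x₂ * f {1}) := by
  have key : (1 : ℝ) ≤ f {0} + f {1} := by
    have := hsub {0} {1}
    have hi : ({0} : Finset (Fin 2)) ∩ {1} = ∅ := by decide
    have hu : ({0} : Finset (Fin 2)) ∪ {1} = {0, 1} := by decide
    rw [hi, hu, h0, h1] at this; linarith
  refine ⟨?_, ?_, ?_, ?_, ?_⟩
  · intro S
    have hS : S = ∅ ∨ S = {0} ∨ S = {1} ∨ S = {0,1} := by revert S; decide
    rcases hS with h|h|h|h <;> rw [h] <;>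
      [rw [hθempty]; rw [hθ0]; rw [hθ1]; rw [hθ01]] <;> linarith
  · rw [univ_finset_fin2]
    rw [show ({∅, {0}, {1}, {0, 1}} : Finset (Finset (Fin 2))) =
      insert ∅ (insert {0} (insert {1} {({0,1} : Finset (Fin 2))})) from rfl]
    rw [Finset.sum_insert (by decide), Finset.sum_insert (by decide),
      Finset.sum_insert (by decide), Finset.sum_singleton]
    rw [hθempty, hθ0, hθ1, hθ01]; ring
  · rw [filter0, show ({{0}, {0,1}} : Finset (Finset (Fin 2))) =
      insert {0} {({0,1} : Finset (Fin 2))} from rfl,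
      Finset.sum_insert (by decide), Finset.sum_singleton, hθ0, hθ01]; ring
  · rw [filter1, show ({{1}, {0,1}} : Finset (Finset (Fin 2))) =
      insert {1} {({0,1} : Finset (Fin 2))} from rfl,
      Finset.sum_insert (by decide), Finset.sum_singleton, hθ1, hθ01]; ring
  · intro θ' hpos htot hm0 hm1
    have e0 : θ' {0} + θ' {0,1} = x₁ := by
      rw [filter0, show ({{0}, {0,1}} : Finset (Finset (Fin 2))) =
        insert {0} {({0,1} : Finset (Fin 2))} from rfl,
        Finset.sum_insert (by decide), Finset.sum_singleton] at hm0
      exact hm0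
    have e1 : θ' {1} + θ' {0,1} = x₂ := by
      rw [filter1, show ({{1}, {0,1}} : Finset (Finset (Fin 2))) =
        insert {1} {({0,1} : Finset (Fin 2))} from rfl,
        Finset.sum_insert (by decide), Finset.sum_singleton] at hm1
      exact hm1
    have etot : ∑ S : Finset (Fin 2), θ' S * f S =
        θ' ∅ * f ∅ + θ' {0} * f {0} + θ' {1} * f {1} + θ' {0,1} * f {0,1} := by
      rw [univ_finset_fin2, show ({∅, {0}, {1}, {0, 1}} : Finset (Finset (Fin 2))) =
        insert ∅ (insert {0} (insert {1} {({0,1} : Finset (Fin 2))})) from rfl,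
        Finset.sum_insert (by decide), Finset.sum_insert (by decide),
        Finset.sum_insert (by decide), Finset.sum_singleton]
      ring
    have hd := hpos {0,1}
    have hf0 : 0 ≤ f {0} := by rw [← h0]; exact hmono ∅ {0} (by decide)
    have hf1 : 0 ≤ f {1} := by rw [← h0]; exact hmono ∅ {1} (by decide)
    rw [etot, h0, h1, ← e0, ← e1]
    nlinarith [hpos {0}, hpos {1}, mul_nonneg hd (sub_nonneg.mpr key)]
end

section
/- Let f: Finset (Fin n) → ℝ be submodular with f(full set) = 1. Then for any S ⊆ [n], f(S) ≤ Σ_{i ∈ [n]} f([n]\{i}) - (n-1) + Σ_{i ∈ S} (1 - f([n]\{i})). -/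
lemma aux_8 (n : ℕ) (f : Finset (Fin n) → ℝ)
    (hsub : ∀ S T : Finset (Fin n), f (S ∩ T) + f (S ∪ T) ≤ f S + f T)
    (hfull : f Finset.univ = 1) (T : Finset (Fin n)) :
    f (Finset.univ \ T) + (T.card : ℝ) - 1 ≤ ∑ i ∈ T, f (Finset.univ \ {i}) := by
  induction T using Finset.induction with
  | empty => simp [hfull]
  | @insert a T hi' ih =>
    have key := hsub (Finset.univ \ {a}) (Finset.univ \ T)
    have h1 : (Finset.univ \ {a}) ∩ (Finset.univ \ T) = Finset.univ \ insert a T := by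
      ext x; simp [Finset.mem_sdiff]
    have h2 : (Finset.univ \ {a}) ∪ (Finset.univ \ T) = (Finset.univ : Finset (Fin n)) := by
      ext x
      simp only [Finset.mem_union, Finset.mem_sdiff, Finset.mem_univ, true_and,
        Finset.mem_singleton, iff_true]
      by_cases hx : x = a
      · subst hx; right; exact hi'
      · left; exact hx
    rw [h1, h2, hfull] at key
    rw [Finset.sum_insert hi', Finset.card_insert_of_notMem hi']
    push_cast
    linarith

theorem stmt_8 (n : ℕ) (f : Finset (Fin n) → ℝ)
    (hsub : ∀ S T : Finset (Fin n), f (S ∩ T) + f (S ∪ T) ≤ f S + f T)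
    (hfull : f Finset.univ = 1) (S : Finset (Fin n)) :
    f S ≤ (∑ i : Fin n, f (Finset.univ \ {i})) - ((n : ℝ) - 1) +
      ∑ i ∈ S, (1 - f (Finset.univ \ {i})) := by
  have key := aux_8 n f hsub hfull (Finset.univ \ S)
  have hSS : Finset.univ \ (Finset.univ \ S) = S := by
    simp [Finset.sdiff_sdiff_self_left]
  rw [hSS] at key
  have hcard : ((Finset.univ \ S).card : ℝ) = n - S.card := by
    rw [Finset.card_sdiff_of_subset (Finset.subset_univ S), Finset.card_univ, Fintype.card_fin]
    exact Nat.cast_sub (by simpa using Finset.card_le_univ S)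
  have hsplit : ∑ i ∈ Finset.univ \ S, f (Finset.univ \ {i}) + ∑ i ∈ S, f (Finset.univ \ {i})
      = ∑ i : Fin n, f (Finset.univ \ {i}) :=
    Finset.sum_sdiff (Finset.subset_univ S)
  rw [Finset.sum_sub_distrib, Finset.sum_const, nsmul_eq_mul, mul_one]
  rw [hcard] at key
  linarith
end

section
/- Let x ∈ [0,1]³ with x₁ ≤ x₂ ≤ x₃. The distribution θ_ω (as parameterized by ω in the family of pairwise independent distributions on three Bernoulli variables with marginals x) is nonnegative in all eight entries if and only if max((1-x₃)(1-x₁-x₂), 0) ≤ ω ≤ min(x₁x₂x₃ + (1-x₁)(1-x₂)(1-x₃), (1-x₂)(1-x₃)). -/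
set_option maxHeartbeats 800000


theorem stmt_10 (x : Fin 3 → ℝ) (hx : ∀ i, 0 ≤ x i ∧ x i ≤ 1)
    (hord1 : x 0 ≤ x 1) (hord2 : x 1 ≤ x 2) (ω : ℝ)
    (θ : Finset (Fin 3) → ℝ)
    (hempty : θ ∅ = ω)
    (h1 : θ {0} = -ω + (1 - x 1) * (1 - x 2))
    (h2 : θ {1} = -ω + (1 - x 0) * (1 - x 2))
    (h3 : θ {2} = -ω + (1 - x 0) * (1 - x 1))
    (h12 : θ {0, 1} = ω + (x 0 + x 1 - 1) * (1 - x 2))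
    (h13 : θ {0, 2} = ω + (x 0 + x 2 - 1) * (1 - x 1))
    (h23 : θ {1, 2} = ω + (x 1 + x 2 - 1) * (1 - x 0))
    (h123 : θ {0, 1, 2} = -ω + x 0 * x 1 * x 2 + (1 - x 0) * (1 - x 1) * (1 - x 2)) :
    (∀ S : Finset (Fin 3), 0 ≤ θ S) ↔
      (max ((1 - x 2) * (1 - x 0 - x 1)) 0 ≤ ω ∧
        ω ≤ min (x 0 * x 1 * x 2 + (1 - x 0) * (1 - x 1) * (1 - x 2))
          ((1 - x 1) * (1 - x 2))) := by
  obtain ⟨h00, h01⟩ := hx 0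
  obtain ⟨h10, h11⟩ := hx 1
  obtain ⟨h20, h21⟩ := hx 2
  constructor
  · intro h
    have e0 := h ∅
    have e1 := h {0}
    have e12 := h {0, 1}
    have e123 := h {0, 1, 2}
    rw [hempty] at e0
    rw [h1] at e1
    rw [h12] at e12
    rw [h123] at e123
    constructor
    · exact max_le (by nlinarith) e0
    · exact le_min (by nlinarith) (by nlinarith)
  · rintro ⟨hl, hr⟩
    have hl1 := le_of_max_le_left hl
    have hl2 := le_of_max_le_right hl
    have hr1 := hr.trans (min_le_left _ _)
    have hr2 := hr.trans (min_le_right _ _)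
    have e0 : 0 ≤ θ ∅ := by rw [hempty]; linarith
    have e1 : 0 ≤ θ {0} := by rw [h1]; linarith
    have e2 : 0 ≤ θ {1} := by rw [h2]; nlinarith [mul_nonneg (by linarith : (0:ℝ) ≤ x 1 - x 0) (by linarith : (0:ℝ) ≤ 1 - x 2)]
    have e3 : 0 ≤ θ {2} := by rw [h3]; nlinarith [mul_nonneg (by linarith : (0:ℝ) ≤ 1 - x 1) (by linarith : (0:ℝ) ≤ x 2 - x 0)]
    have e12 : 0 ≤ θ {0, 1} := by rw [h12]; linarith
    have e13 : 0 ≤ θ {0, 2} := by rw [h13]; nlinarith [mul_nonneg h00 (by linarith : (0:ℝ) ≤ x 2 - x 1)]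
    have e23 : 0 ≤ θ {1, 2} := by rw [h23]; nlinarith [mul_nonneg h10 (by linarith : (0:ℝ) ≤ x 2 - x 0)]
    have e123 : 0 ≤ θ {0, 1, 2} := by rw [h123]; linarith
    intro S
    fin_cases S
    · exact e0
    · exact e1
    · exact e2
    · exact e12
    · exact e3
    · exact e13
    · exact e23
    · exact e123
end

section
/- Let x ∈ [0,1]ⁿ with x₁ ≤ ... ≤ xₙ, Σ_{i=1}^n x_i ≤ 1, and suppose f: Fin n → ℝ satisfies 0 ≤ f(i) ≤ f(n-1) for all i (i.e., f(n-1) = max f(i)) with f(n-1) > 0. Then Σ_{i=1}^{n-1} x_i f(i) + xₙ f(n) - 4xₙ Σ_{i=1}^{n-1} x_i f(i) ≥ 0, where f(n) denotes the largest value f(n-1). -/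
theorem stmt_12 (n : ℕ) (hn : 2 ≤ n) (x : Fin n → ℝ)
    (hx : ∀ i, 0 ≤ x i ∧ x i ≤ 1)
    (hord : ∀ i j : Fin n, i ≤ j → x i ≤ x j)
    (hsimplex : ∑ i : Fin n, x i ≤ 1)
    (last : Fin n) (hlast : last = ⟨n - 1, by omega⟩)
    (f : Fin n → ℝ)
    (hf0 : ∀ i, 0 ≤ f i)
    (hfmax : ∀ i, f i ≤ f last)
    (hfpos : 0 < f last) :
    (∑ i ∈ Finset.univ.erase last, x i * f i) + x last * f last -
      4 * x last * ∑ i ∈ Finset.univ.erase last, x i * f i ≥ 0 := by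
  set A := ∑ i ∈ Finset.univ.erase last, x i * f i with hAdef
  set s := ∑ i ∈ Finset.univ.erase last, x i with hsdef
  have hA0 : 0 ≤ A := Finset.sum_nonneg fun i _ => mul_nonneg (hx i).1 (hf0 i)
  have hs0 : 0 ≤ s := Finset.sum_nonneg fun i _ => (hx i).1
  have ht0 : 0 ≤ x last := (hx last).1
  have hAle : A ≤ f last * s := by
    rw [Finset.mul_sum]
    apply Finset.sum_le_sum
    intro i _
    rw [mul_comm (f last)]
    exact mul_le_mul_of_nonneg_left (hfmax i) (hx i).1
  have hst : s + x last ≤ 1 := by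
    have := Finset.sum_erase_add Finset.univ x (Finset.mem_univ last)
    rw [hsdef, this]; exact hsimplex
  rcases le_or_gt (4 * x last) 1 with h | h
  · nlinarith [mul_nonneg hA0 ht0, mul_nonneg ht0 hfpos.le, mul_nonneg hA0 (sub_nonneg.2 h)]
  · have h1 : A * (1 - 4 * x last) ≥ f last * s * (1 - 4 * x last) := by
      apply mul_le_mul_of_nonpos_right hAle; linarith
    have h2 : s + x last - 4 * s * x last ≥ 0 := by nlinarith [sq_nonneg (s - x last), mul_nonneg (by linarith : (0:ℝ) ≤ s + x last) (by linarith : (0:ℝ) ≤ 1 - (s + x last))]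
    nlinarith [mul_nonneg hfpos.le h2]
end

section
/- For all real numbers x with 0 ≤ x ≤ 1 and integers n ≥ 2, k with 1 ≤ k ≤ n and (k-1)/(n-1) ≤ x ≤ k/n, we have n·x ≤ (4k/(4k-1)) · x·((n-1)(1-x) + k). -/
theorem stmt_13 (n k : ℕ) (x : ℝ) (hx0 : 0 ≤ x) (hx1 : x ≤ 1)
    (hn : 2 ≤ n) (hk1 : 1 ≤ k) (hkn : k ≤ n)
    (hlo : ((k : ℝ) - 1) / ((n : ℝ) - 1) ≤ x) (hhi : x ≤ (k : ℝ) / n) :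
    (n : ℝ) * x ≤ (4 * k / (4 * k - 1)) * (x * (((n : ℝ) - 1) * (1 - x) + k)) := by
  have hkR : (1:ℝ) ≤ k := by exact_mod_cast hk1
  have hnR : (2:ℝ) ≤ n := by exact_mod_cast hn
  have hnpos : (0:ℝ) < n := by linarith
  have hpos : (0:ℝ) < 4 * k - 1 := by linarith
  have hnx : x * (n:ℝ) ≤ k := (le_div_iff₀ hnpos).mp hhi
  have h1 : 0 ≤ x * ((k:ℝ) - n * x) := mul_nonneg hx0 (by nlinarith)
  have h2 : 0 ≤ x * ((n:ℝ) - 2 * k)^2 := mul_nonneg hx0 (sq_nonneg _)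
  have hA : 0 ≤ (4*(k:ℝ)*((n:ℝ)-1)) * (x * ((k:ℝ) - n * x)) :=
    mul_nonneg (by nlinarith) h1
  rw [div_mul_eq_mul_div, le_div_iff₀ hpos]
  nlinarith [hA, h2, hnpos, mul_pos hnpos hpos]
end

section
/- For all real numbers x with 0 ≤ x ≤ 1 and integers n ≥ 2, k with 1 ≤ k ≤ n and k/n ≤ x ≤ k/(n-1), we have k ≤ (4k/(4k-1)) · ((n-1+k)x - (n-1)x²). -/
/-!
On `[k/n, k/(n-1)]` the concave quadratic `g x = (n-1+k) x - (n-1) x²` is at least its value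
`k - k(n-k)/n²` at the left endpoint (at the right endpoint it equals `k`), and `k(n-k)/n² ≤ 1/4`
by AM-GM. Hence `g x ≥ k - 1/4`, which is the claim after clearing the factor `4k/(4k-1)`.
-/

section

variable {𝕜 : Type*} [Field 𝕜] [LinearOrder 𝕜] [IsStrictOrderedRing 𝕜]

theorem sub_mul_sub_div_sq_le_quadratic {n k x : 𝕜} (hn : 1 ≤ n) (hkn : k ≤ n)
    (hlo : k ≤ n * x) (hhi : (n - 1) * x ≤ k) :
    k - k * (n - k) / n ^ 2 ≤ (n - 1 + k) * x - (n - 1) * x ^ 2 := by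
  have hn0 : 0 < n := by linarith
  -- `n (g x - g (k/n)) = (n x - k) (k - (n-1) x) + (n-1)(n-k)(x - k/n)`
  have hprod : 0 ≤ n * ((n * x - k) * (k - (n - 1) * x)) :=
    mul_nonneg hn0.le (mul_nonneg (by linarith) (by linarith))
  have hlin : 0 ≤ (n - 1) * (n - k) * (n * x - k) :=
    mul_nonneg (mul_nonneg (by linarith) (by linarith)) (by linarith)
  rw [sub_le_iff_le_add, ← sub_le_iff_le_add', le_div_iff₀ (by positivity)]
  linear_combination hprod + hlin

theorem mul_sub_div_sq_le_quarter {n k : 𝕜} (hn : 0 < n) : k * (n - k) / n ^ 2 ≤ 1 / 4 := by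
  rw [div_le_iff₀ (by positivity)]
  have := four_mul_le_sq_add k (n - k)
  rw [add_sub_cancel] at this
  linarith

theorem le_four_mul_div_mul_of_sub_quarter_le {k y : 𝕜} (hk : 1 ≤ k) (hy : k - 1 / 4 ≤ y) :
    k ≤ 4 * k / (4 * k - 1) * y := by
  rw [div_mul_eq_mul_div, le_div_iff₀ (by linarith)]
  nlinarith

end

theorem stmt_14_general (n k : ℕ) (x : ℝ)
    (hn : 2 ≤ n) (hk1 : 1 ≤ k) (hkn : k ≤ n)
    (hlo : (k : ℝ) / n ≤ x) (hhi : x ≤ (k : ℝ) / ((n : ℝ) - 1)) :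
    (k : ℝ) ≤ (4 * k / (4 * k - 1)) * (((n : ℝ) - 1 + k) * x - ((n : ℝ) - 1) * x ^ 2) := by
  have hnR : (2 : ℝ) ≤ n := by exact_mod_cast hn
  have hlo' : (k : ℝ) ≤ n * x := by rwa [div_le_iff₀' (by linarith)] at hlo
  have hhi' : ((n : ℝ) - 1) * x ≤ k := by rwa [le_div_iff₀' (by linarith)] at hhi
  have hquad := sub_mul_sub_div_sq_le_quadratic (by linarith) (by exact_mod_cast hkn) hlo' hhi'
  have hquarter := mul_sub_div_sq_le_quarter (k := (k : ℝ)) (by linarith : (0 : ℝ) < n)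
  exact le_four_mul_div_mul_of_sub_quarter_le (by exact_mod_cast hk1) (by linarith)

theorem stmt_14 (n k : ℕ) (x : ℝ) (hx0 : 0 ≤ x) (hx1 : x ≤ 1)
    (hn : 2 ≤ n) (hk1 : 1 ≤ k) (hkn : k ≤ n)
    (hlo : (k : ℝ) / n ≤ x) (hhi : x ≤ (k : ℝ) / ((n : ℝ) - 1)) :
    (k : ℝ) ≤ (4 * k / (4 * k - 1)) * (((n : ℝ) - 1 + k) * x - ((n : ℝ) - 1) * x ^ 2) :=
  stmt_14_general n k x hn hk1 hkn hlo hhi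
end
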